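/- Let a, b > 0 be real numbers and 0 < t, τ < 1. If t ≤ min{τ, 1-τ} or t ≥ max{τ, 1-τ}, then !_t(a,b) · ((a ∇ b)/!_τ(a,b))^{t(1-t)/(τ(1-τ))} ≤ a ∇ b. If instead min{τ, 1-τ} ≤ t ≤ max{τ, 1-τ}, the reverse inequality holds. -/

import Mathlib

/-- The weighted harmonic mean of positive reals: `a !_t b = ((1-t)a⁻¹ + t b⁻¹)⁻¹`. -/
noncomputable def wharm (t a b : ℝ) : ℝ := ((1 - t) * a⁻¹ + t * b⁻¹)⁻¹

/-- The harmonic Heinz mean `!_t(a,b) = (a !_t b + a !_{1-t} b)/2`. -/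
noncomputable def heinzHarm (t a b : ℝ) : ℝ := (wharm t a b + wharm (1 - t) a b) / 2

/-!
Clearing denominators gives `!_t(a,b) · (1 + t(1-t) x) = a ∇ b` with `x = (a-b)²/(ab) ≥ 0`.
Hence `(a ∇ b)/!_τ(a,b) = 1 + s x` with `s = τ(1-τ)`, and with `u = t(1-t)` the claim reads
`(1 + s x)^(u/s) ≤ 1 + u x` (resp. `≥`), which is Bernoulli's inequality for the exponent
`u/s ≤ 1` (resp. `≥ 1`). Finally `t(1-t) - τ(1-τ) = (t-τ)(1-τ-t)`, so `u ≤ s` when `t` lies outside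
the interval between `τ` and `1-τ`, and `u ≥ s` when it lies inside.
-/

section Means

variable {a b t : ℝ}

lemma wharm_eq_mul_div (ha : a ≠ 0) (hb : b ≠ 0) :
    wharm t a b = a * b / (t * a + (1 - t) * b) := by
  rw [wharm, inv_eq_iff_eq_inv, inv_div]
  field_simp
  ring

lemma convex_comb_pos (ha : 0 < a) (hb : 0 < b) (ht₀ : 0 ≤ t) (ht₁ : t ≤ 1) :
    0 < t * a + (1 - t) * b := by
  nlinarith [mul_le_mul_of_nonneg_left (min_le_left a b) ht₀,
    mul_le_mul_of_nonneg_left (min_le_right a b) (sub_nonneg.2 ht₁), lt_min ha hb]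

lemma heinzHarm_mul_one_add (ha : 0 < a) (hb : 0 < b) (ht₀ : 0 ≤ t) (ht₁ : t ≤ 1) :
    heinzHarm t a b * (1 + t * (1 - t) * ((a - b) ^ 2 / (a * b))) = (a + b) / 2 := by
  have hd₁ : t * a + (1 - t) * b ≠ 0 := (convex_comb_pos ha hb ht₀ ht₁).ne'
  have hd₂ : (1 - t) * a + t * b ≠ 0 := by
    rw [add_comm]
    exact (convex_comb_pos hb ha ht₀ ht₁).ne'
  rw [heinzHarm, wharm_eq_mul_div ha.ne' hb.ne',
    wharm_eq_mul_div ha.ne' hb.ne', sub_sub_cancel,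
    div_add_div _ _ hd₁ hd₂, div_div, div_mul_eq_mul_div,
    div_eq_div_iff (mul_ne_zero (mul_ne_zero hd₁ hd₂) two_ne_zero) two_ne_zero]
  field_simp
  ring

lemma heinzHarm_pos (ha : 0 < a) (hb : 0 < b) (ht₀ : 0 ≤ t) (ht₁ : t ≤ 1) :
    0 < heinzHarm t a b := by
  have hx : 0 ≤ t * (1 - t) * ((a - b) ^ 2 / (a * b)) := by
    have := sub_nonneg.2 ht₁
    positivity
  refine pos_of_mul_pos_left ?_ (by linarith : 0 ≤ 1 + t * (1 - t) * ((a - b) ^ 2 / (a * b)))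
  rw [heinzHarm_mul_one_add ha hb ht₀ ht₁]
  positivity

lemma add_div_two_div_heinzHarm (ha : 0 < a) (hb : 0 < b) (ht₀ : 0 ≤ t) (ht₁ : t ≤ 1) :
    (a + b) / 2 / heinzHarm t a b = 1 + t * (1 - t) * ((a - b) ^ 2 / (a * b)) := by
  rw [← heinzHarm_mul_one_add ha hb ht₀ ht₁,
    mul_div_cancel_left₀ _ (heinzHarm_pos ha hb ht₀ ht₁).ne']

end Means

section Bernoulli

variable {s u y : ℝ}

lemma one_add_mul_rpow_div_le (hs : 0 < s) (hu : 0 ≤ u) (hus : u ≤ s) (hy : -1 ≤ s * y) :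
    (1 + s * y) ^ (u / s) ≤ 1 + u * y := by
  calc (1 + s * y) ^ (u / s) ≤ 1 + u / s * (s * y) :=
        rpow_one_add_le_one_add_mul_self hy (by positivity) ((div_le_one hs).2 hus)
    _ = 1 + u * y := by field_simp

lemma one_add_mul_le_rpow_div (hs : 0 < s) (hsu : s ≤ u) (hy : -1 ≤ s * y) :
    1 + u * y ≤ (1 + s * y) ^ (u / s) := by
  calc 1 + u * y = 1 + u / s * (s * y) := by field_simp
    _ ≤ (1 + s * y) ^ (u / s) :=
        one_add_mul_self_le_rpow_one_add hy ((one_le_div hs).2 hsu)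

end Bernoulli

section Weights

lemma mul_one_sub_sub_mul_one_sub (t τ : ℝ) :
    t * (1 - t) - τ * (1 - τ) = (t - τ) * (1 - τ - t) := by
  ring

variable {t τ : ℝ}

lemma mul_one_sub_le_of_le_min_or_max_le (h : t ≤ min τ (1 - τ) ∨ max τ (1 - τ) ≤ t) :
    t * (1 - t) ≤ τ * (1 - τ) := by
  rw [← sub_nonpos, mul_one_sub_sub_mul_one_sub]
  rcases h with h | h
  · exact mul_nonpos_of_nonpos_of_nonneg (by linarith [min_le_left τ (1 - τ)])
      (by linarith [min_le_right τ (1 - τ)])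
  · exact mul_nonpos_of_nonneg_of_nonpos (by linarith [le_max_left τ (1 - τ)])
      (by linarith [le_max_right τ (1 - τ)])

lemma mul_one_sub_le_of_mem_uIcc (h : t ∈ Set.uIcc τ (1 - τ)) :
    τ * (1 - τ) ≤ t * (1 - t) := by
  rw [← sub_nonneg, mul_one_sub_sub_mul_one_sub]
  rcases Set.mem_uIcc.1 h with ⟨h₁, h₂⟩ | ⟨h₁, h₂⟩
  · exact mul_nonneg (by linarith) (by linarith)
  · exact mul_nonneg_of_nonpos_of_nonpos (by linarith) (by linarith)

end Weights

theorem stmt_5 (a b t τ : ℝ) (ha : 0 < a) (hb : 0 < b)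
    (ht : t ∈ Set.Ioo (0 : ℝ) 1) (hτ : τ ∈ Set.Ioo (0 : ℝ) 1) :
    ((t ≤ min τ (1 - τ) ∨ t ≥ max τ (1 - τ)) →
      heinzHarm t a b * (((a + b) / 2) / heinzHarm τ a b) ^ (t * (1 - t) / (τ * (1 - τ)))
        ≤ (a + b) / 2) ∧
    ((min τ (1 - τ) ≤ t ∧ t ≤ max τ (1 - τ)) →
      (a + b) / 2
        ≤ heinzHarm t a b * (((a + b) / 2) / heinzHarm τ a b) ^ (t * (1 - t) / (τ * (1 - τ)))) := by
  obtain ⟨ht₀, ht₁⟩ := ht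
  obtain ⟨hτ₀, hτ₁⟩ := hτ
  have hs : 0 < τ * (1 - τ) := mul_pos hτ₀ (sub_pos.2 hτ₁)
  have hu : 0 ≤ t * (1 - t) := mul_nonneg ht₀.le (sub_nonneg.2 ht₁.le)
  have hx : -1 ≤ τ * (1 - τ) * ((a - b) ^ 2 / (a * b)) := by
    have : 0 ≤ τ * (1 - τ) * ((a - b) ^ 2 / (a * b)) := by positivity
    linarith
  have hH := heinzHarm_mul_one_add ha hb ht₀.le ht₁.le
  have hHpos := (heinzHarm_pos ha hb ht₀.le ht₁.le).le
  rw [add_div_two_div_heinzHarm ha hb hτ₀.le hτ₁.le]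
  refine ⟨fun h => ?_, fun h => ?_⟩
  · calc _ ≤ _ := mul_le_mul_of_nonneg_left (one_add_mul_rpow_div_le hs hu
          (mul_one_sub_le_of_le_min_or_max_le h) hx) hHpos
      _ = _ := hH
  · calc _ = _ := hH.symm
      _ ≤ _ := mul_le_mul_of_nonneg_left (one_add_mul_le_rpow_div hs
          (mul_one_sub_le_of_mem_uIcc h) hx) hHpos
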